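/- arXiv:2408.09718 — 2 statements merged into one kernel-verified Lean document; each statement's English description precedes it below -/
import Mathlib

section
/- Let n ~ N(0, I_d), let x_0, ..., x_{L-1} ∈ R^d span a subspace S of R^d, and let V_ℓ = { v : ⟨v, x_ℓ⟩ ≥ max_{k≠ℓ} ⟨v, x_k⟩ }. Then the vector E[n · 1{n ∈ V_ℓ}] lies in S, i.e., is a linear combination of x_0, ..., x_{L-1}. -/
/-!
The reflection of `ℝ^d` in the span `S` of the templates is a linear isometry, so it preserves the
standard Gaussian measure; it fixes every template, so it preserves each inner product `⟪x k, v⟫`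
and hence the region `V ℓ`. Changing variables, the restricted mean `m = E[n · 1{n ∈ V ℓ}]` is
therefore fixed by the reflection, and the fixed points of the reflection in `S` are exactly `S`.
-/

open MeasureTheory ProbabilityTheory Real Filter

/-- The standard Gaussian measure on `Fin d → ℝ`. -/
noncomputable def stdGaussian (d : ℕ) : Measure (Fin d → ℝ) :=
  Measure.pi (fun _ => gaussianReal 0 1)

instance (d : ℕ) : IsProbabilityMeasure (stdGaussian d) := by
  unfold _root_.stdGaussian; infer_instance

open scoped RealInnerProductSpace

section Reflection

variable {E : Type*} [NormedAddCommGroup E] [InnerProductSpace ℝ E]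

theorem Submodule.inner_reflection_right_of_mem (K : Submodule ℝ E) [K.HasOrthogonalProjection]
    (w : E) {y : E} (hy : y ∈ K) : ⟪y, K.reflection w⟫ = ⟪y, w⟫ := by
  rw [← K.reflection_mem_subspace_eq_self hy, LinearIsometryEquiv.inner_map_map,
    K.reflection_mem_subspace_eq_self hy]

/-- Written with `⟪y k, w⟫` so that on `EuclideanSpace ℝ ι` the inner product unfolds to
`∑ j, w j * y k j`. -/
def voronoiCell {ι : Type*} (y : ι → E) (ℓ : ι) : Set E :=
  {w | ∀ k, k ≠ ℓ → ⟪y k, w⟫ ≤ ⟪y ℓ, w⟫}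

theorem isClosed_voronoiCell {ι : Type*} (y : ι → E) (ℓ : ι) : IsClosed (voronoiCell y ℓ) := by
  simp only [voronoiCell, Set.ofPred_forall]
  exact isClosed_iInter fun _ => isClosed_iInter fun _ =>
    isClosed_le (continuous_const.inner continuous_id) (continuous_const.inner continuous_id)

theorem reflection_preimage_voronoiCell {ι : Type*} (y : ι → E) (ℓ : ι)
    [(Submodule.span ℝ (Set.range y)).HasOrthogonalProjection] :
    (Submodule.span ℝ (Set.range y)).reflection ⁻¹' voronoiCell y ℓ = voronoiCell y ℓ := by
  ext w
  simp only [voronoiCell, Set.mem_preimage, Set.mem_ofPred_eq,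
    Submodule.inner_reflection_right_of_mem _ _ (Submodule.subset_span (Set.mem_range_self _))]

variable [MeasurableSpace E] [BorelSpace E]

theorem LinearIsometryEquiv.measurePreserving_stdGaussian [FiniteDimensional ℝ E]
    (f : E ≃ₗᵢ[ℝ] E) :
    MeasurePreserving f (ProbabilityTheory.stdGaussian E) (ProbabilityTheory.stdGaussian E) :=
  ⟨f.continuous.measurable, stdGaussian_map f⟩

theorem Submodule.integral_indicator_id_mem_of_measurePreserving_reflection [CompleteSpace E]
    {μ : Measure E} (K : Submodule ℝ E) [K.HasOrthogonalProjection]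
    (hμ : MeasurePreserving K.reflection μ μ) {V : Set E} (hV : K.reflection ⁻¹' V = V) :
    ∫ w, V.indicator id w ∂μ ∈ K := by
  rw [← K.reflection_eq_self_iff]
  calc K.reflection (∫ w, V.indicator id w ∂μ)
      = ∫ w, V.indicator id (K.reflection w) ∂μ := by
        rw [← LinearIsometryEquiv.coe_toLinearIsometry, ← LinearIsometry.integral_comp_comm]
        refine integral_congr_ae (ae_of_all _ fun w => ?_)
        have hmem : K.reflection w ∈ V ↔ w ∈ V := by rw [← Set.mem_preimage, hV]
        by_cases hw : w ∈ V <;> simp [hw, hmem]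
    _ = ∫ w, V.indicator id w ∂μ :=
        hμ.integral_comp K.reflection.toHomeomorph.measurableEmbedding _

theorem integral_indicator_voronoiCell_mem_span [FiniteDimensional ℝ E] {ι : Type*}
    (y : ι → E) (ℓ : ι) :
    ∫ w, (voronoiCell y ℓ).indicator id w ∂ProbabilityTheory.stdGaussian E ∈
      Submodule.span ℝ (Set.range y) :=
  Submodule.integral_indicator_id_mem_of_measurePreserving_reflection _
    (LinearIsometryEquiv.measurePreserving_stdGaussian _) (reflection_preimage_voronoiCell y ℓ)

end Reflection

theorem integral_mul_indicator_stdGaussian {d : ℕ} {V : Set (EuclideanSpace ℝ (Fin d))}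
    (hV : MeasurableSet V) (i : Fin d) :
    ∫ ω, ω i * (WithLp.toLp 2 ⁻¹' V).indicator (fun _ => (1 : ℝ)) ω ∂_root_.stdGaussian d =
      (∫ w, V.indicator id w ∂ProbabilityTheory.stdGaussian (EuclideanSpace ℝ (Fin d))) i := by
  have hint : Integrable (V.indicator id) (ProbabilityTheory.stdGaussian _) :=
    IsGaussian.integrable_id.indicator hV
  have hcomp := hint.eval_piLp i
  rw [eval_integral_piLp hint.eval_piLp]
  rw [← map_pi_eq_stdGaussian] at hcomp ⊢
  rw [integral_map (by fun_prop) hcomp.aestronglyMeasurable]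
  refine integral_congr_ae (ae_of_all _ fun ω => ?_)
  by_cases hω : WithLp.toLp 2 ω ∈ V <;> simp [hω]

/-- The restricted Gaussian mean `E[n · 1{n ∈ V ℓ}]` over the Voronoi-type region of
template `ℓ` lies in the span of the templates `x 0, ..., x (L-1)`. -/
theorem voronoi_mean_mem_span {d L : ℕ} (x : Fin L → Fin d → ℝ) (ℓ : Fin L) :
    (fun i => ∫ ω, ω i *
        Set.indicator {v : Fin d → ℝ | ∀ k, k ≠ ℓ → (∑ j, v j * x k j) ≤ ∑ j, v j * x ℓ j}
          (fun _ => (1 : ℝ)) ω ∂stdGaussian d)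
      ∈ Submodule.span ℝ (Set.range x) := by
  set y : Fin L → EuclideanSpace ℝ (Fin d) := fun k => WithLp.toLp 2 (x k)
  have hmean := integral_mul_indicator_stdGaussian (isClosed_voronoiCell y ℓ).measurableSet
  have hspan := (Submodule.apply_mem_span_image_iff_mem_span
    (WithLp.linearEquiv 2 ℝ (Fin d → ℝ)).injective).2 (integral_indicator_voronoiCell_mem_span y ℓ)
  rw [← Set.range_comp] at hspan
  exact funext hmean ▸ hspan
end

section
/- (Bernstein's law of large numbers) Let Y_1, Y_2, ... be a sequence of random variables with common finite mean μ, uniformly bounded variances Var(Y_j) ≤ K < ∞, and Cov(Y_i, Y_j) → 0 as |i − j| → ∞. Then (1/n) Σ_{i=1}^n Y_i converges to μ in probability as n → ∞. -/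
open MeasureTheory Filter Topology Finset

/-! With `X i = Y (i + 1) - m`, the mean-square deviation of the sample mean from `m` is
`n⁻² ∑_{i,j<n} E[X i X j]`. Every term is at most `K` (AM–GM), and given `ε` there is `N` such that
the terms with `|i - j| ≥ N` are below `ε`; as only `2N` terms per row are near the diagonal, the
double sum is at most `2NKn + εn²`. So the sample mean converges to `m` in `L²`, hence in
probability by Chebyshev's inequality. -/

section SecondMoments

variable {Ω : Type*} [MeasurableSpace Ω] {μ : Measure Ω}

theorem abs_integral_mul_le_of_integral_sq_le {f g : Ω → ℝ} {K : ℝ} (hf : MemLp f 2 μ)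
    (hg : MemLp g 2 μ) (hfK : ∫ ω, f ω ^ 2 ∂μ ≤ K) (hgK : ∫ ω, g ω ^ 2 ∂μ ≤ K) :
    |∫ ω, f ω * g ω ∂μ| ≤ K := by
  have amgm (ω : Ω) : |f ω * g ω| ≤ (f ω ^ 2 + g ω ^ 2) / 2 := by
    rw [abs_mul]
    nlinarith [sq_nonneg (|f ω| - |g ω|), sq_abs (f ω), sq_abs (g ω)]
  calc |∫ ω, f ω * g ω ∂μ| ≤ ∫ ω, |f ω * g ω| ∂μ := abs_integral_le_integral_abs
    _ ≤ ∫ ω, (f ω ^ 2 + g ω ^ 2) / 2 ∂μ :=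
        integral_mono (hf.integrable_mul hg).abs
          ((hf.integrable_sq.add hg.integrable_sq).div_const 2) amgm
    _ = ((∫ ω, f ω ^ 2 ∂μ) + ∫ ω, g ω ^ 2 ∂μ) / 2 := by
        rw [integral_div, integral_add hf.integrable_sq hg.integrable_sq]
    _ ≤ K := by linarith

theorem integral_sq_sum_eq_sum_sum_integral_mul {ι : Type*} (s : Finset ι) {X : ι → Ω → ℝ}
    (hX : ∀ i ∈ s, MemLp (X i) 2 μ) :
    ∫ ω, (∑ i ∈ s, X i ω) ^ 2 ∂μ = ∑ i ∈ s, ∑ j ∈ s, ∫ ω, X i ω * X j ω ∂μ := by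
  have hint : ∀ i ∈ s, ∀ j ∈ s, Integrable (fun ω => X i ω * X j ω) μ :=
    fun i hi j hj => (hX i hi).integrable_mul (hX j hj)
  simp_rw [sq, sum_mul_sum]
  rw [integral_finsetSum _ fun i hi => integrable_finsetSum _ (hint i hi)]
  exact sum_congr rfl fun i hi => integral_finsetSum _ (hint i hi)

theorem tendstoInMeasure_of_tendsto_integral_sq {ι : Type*} {l : Filter ι} {f : ι → Ω → ℝ}
    {g : Ω → ℝ} (hf : ∀ i, MemLp (f i) 2 μ) (hg : MemLp g 2 μ)
    (h : Tendsto (fun i => ∫ ω, (f i ω - g ω) ^ 2 ∂μ) l (𝓝 0)) : TendstoInMeasure μ f l g := by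
  refine tendstoInMeasure_of_tendsto_eLpNorm two_ne_zero (fun i => (hf i).1) hg.1 ?_
  have heLpNorm (i : ι) : eLpNorm (f i - g) 2 μ
      = ENNReal.ofReal ((∫ ω, (f i ω - g ω) ^ 2 ∂μ) ^ (2⁻¹ : ℝ)) := by
    rw [((hf i).sub hg).eLpNorm_eq_integral_rpow_norm two_ne_zero ENNReal.ofNat_ne_top]
    simp [Real.norm_eq_abs]
  simp_rw [heLpNorm]
  have hsqrt := h.rpow_const (Or.inr (by norm_num : (0 : ℝ) ≤ 2⁻¹))
  rw [Real.zero_rpow (by norm_num)] at hsqrt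
  simpa using ENNReal.tendsto_ofReal hsqrt

end SecondMoments

theorem card_filter_natAbs_sub_lt_le (n i N : ℕ) :
    #{j ∈ range n | ((i : ℤ) - (j : ℕ)).natAbs < N} ≤ 2 * N :=
  calc _ ≤ #(Ico (i + 1 - N) (i + N)) := card_le_card fun j hj => by simp at hj ⊢; omega
    _ ≤ 2 * N := by simp; omega

theorem sum_abs_le_of_abs_le_of_decay {c : ℕ → ℕ → ℝ} {K ε : ℝ} {N : ℕ}
    (hK : ∀ i j, |c i j| ≤ K) (hN : ∀ i j : ℕ, N ≤ ((i : ℤ) - j).natAbs → |c i j| < ε)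
    (n i : ℕ) : ∑ j ∈ range n, |c i j| ≤ 2 * N * K + n * ε := by
  have hK0 : 0 ≤ K := (abs_nonneg _).trans (hK 0 0)
  have hε0 : 0 ≤ ε := (abs_nonneg _).trans (hN N 0 (by simp)).le
  rw [← sum_filter_add_sum_filter_not _ fun j : ℕ => ((i : ℤ) - j).natAbs < N]
  gcongr ?_ + ?_
  · calc _ ≤ #{j ∈ range n | ((i : ℤ) - (j : ℕ)).natAbs < N} • K :=
          sum_le_card_nsmul _ _ _ fun j _ => hK i j
      _ ≤ (2 * N) • K := nsmul_le_nsmul_left hK0 (card_filter_natAbs_sub_lt_le n i N)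
      _ = 2 * N * K := by simp
  · calc _ ≤ #{j ∈ range n | ¬((i : ℤ) - (j : ℕ)).natAbs < N} • ε :=
          sum_le_card_nsmul _ _ _ fun j hj => (hN i j (by simp at hj; omega)).le
      _ ≤ n • ε := nsmul_le_nsmul_left hε0 ((card_filter_le _ _).trans (card_range n).le)
      _ = n * ε := nsmul_eq_mul _ _

theorem tendsto_inv_sq_mul_sum_sum_of_abs_le_of_decay {c : ℕ → ℕ → ℝ} {K : ℝ}
    (hK : ∀ i j, |c i j| ≤ K)
    (hdecay : ∀ ε > 0, ∃ N : ℕ, ∀ i j : ℕ, N ≤ ((i : ℤ) - j).natAbs → |c i j| < ε) :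
    Tendsto (fun n : ℕ => (n : ℝ)⁻¹ ^ 2 * ∑ i ∈ range n, ∑ j ∈ range n, c i j) atTop (𝓝 0) := by
  rw [Metric.tendsto_atTop]
  intro ε hε
  obtain ⟨N, hN⟩ := hdecay (ε / 2) (half_pos hε)
  have hlim : Tendsto (fun n : ℕ => 2 * N * K / n + ε / 2) atTop (𝓝 (ε / 2)) := by
    simpa using (tendsto_const_div_atTop_nhds_zero_nat (2 * N * K : ℝ)).add_const (ε / 2)
  obtain ⟨n₀, hn₀⟩ := eventually_atTop.1
    ((hlim.eventually (gt_mem_nhds (half_lt_self hε))).and (eventually_gt_atTop 0))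
  refine ⟨n₀, fun n hn => ?_⟩
  obtain ⟨hsmall, hn_pos⟩ := hn₀ n hn
  have hn_pos' : (0 : ℝ) < n := by exact_mod_cast hn_pos
  calc dist ((n : ℝ)⁻¹ ^ 2 * ∑ i ∈ range n, ∑ j ∈ range n, c i j) 0
      = (n : ℝ)⁻¹ ^ 2 * |∑ i ∈ range n, ∑ j ∈ range n, c i j| := by
        rw [Real.dist_0_eq_abs, abs_mul, abs_of_nonneg (by positivity)]
    _ ≤ (n : ℝ)⁻¹ ^ 2 * ∑ i ∈ range n, ∑ j ∈ range n, |c i j| := by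
        gcongr
        exact (abs_sum_le_sum_abs _ _).trans (sum_le_sum fun i _ => abs_sum_le_sum_abs _ _)
    _ ≤ (n : ℝ)⁻¹ ^ 2 * ∑ i ∈ range n, (2 * N * K + n * (ε / 2)) := by
        gcongr with i
        exact sum_abs_le_of_abs_le_of_decay hK hN n i
    _ = 2 * N * K / n + ε / 2 := by
        rw [sum_const, card_range, nsmul_eq_mul]
        field_simp
    _ < ε := hsmall

theorem bernstein_lln_general {Ω : Type*} [MeasurableSpace Ω] (μ : Measure Ω) [IsProbabilityMeasure μ]
    (Y : ℕ → Ω → ℝ) (m K : ℝ)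
    (hL2 : ∀ j, MemLp (Y j) 2 μ)
    (hvar : ∀ j, ∫ ω, (Y j ω - m) ^ 2 ∂μ ≤ K)
    (hcov : ∀ ε > 0, ∃ N : ℕ, ∀ i j : ℕ, N ≤ ((i : ℤ) - (j : ℤ)).natAbs →
      |∫ ω, (Y i ω - m) * (Y j ω - m) ∂μ| < ε) :
    TendstoInMeasure μ
      (fun (n : ℕ) ω => (n : ℝ)⁻¹ * ∑ i ∈ Finset.range n, Y (i + 1) ω) atTop
      (fun _ => m) := by
  set X : ℕ → Ω → ℝ := fun i ω => Y (i + 1) ω - m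
  have hX (i : ℕ) : MemLp (X i) 2 μ := (hL2 (i + 1)).sub (memLp_const m)
  have hcovX : ∀ ε > 0, ∃ N : ℕ, ∀ i j : ℕ, N ≤ ((i : ℤ) - j).natAbs →
      |∫ ω, X i ω * X j ω ∂μ| < ε := fun ε hε =>
    (hcov ε hε).imp fun N hN i j hij => hN (i + 1) (j + 1) (by push_cast; simpa using hij)
  have hdev (n : ℕ) (hn : n ≠ 0) (ω : Ω) :
      (n : ℝ)⁻¹ * ∑ i ∈ range n, Y (i + 1) ω - m = (n : ℝ)⁻¹ * ∑ i ∈ range n, X i ω := by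
    simp only [X, sum_sub_distrib, sum_const, card_range, nsmul_eq_mul]
    field_simp
  refine tendstoInMeasure_of_tendsto_integral_sq (fun n => ?_) (memLp_const m) ?_
  · simpa using (memLp_finsetSum' (range n) fun i _ => hL2 (i + 1)).const_mul (n : ℝ)⁻¹
  refine (tendsto_inv_sq_mul_sum_sum_of_abs_le_of_decay (fun i j =>
    abs_integral_mul_le_of_integral_sq_le (hX i) (hX j) (hvar _) (hvar _)) hcovX).congr' ?_
  filter_upwards [eventually_ne_atTop 0] with n hn
  simp_rw [hdev n hn, mul_pow]
  rw [integral_const_mul, integral_sq_sum_eq_sum_sum_integral_mul _ fun i _ => hX i]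

/-- Bernstein's law of large numbers: a sequence of square-integrable random variables with
common mean `m`, uniformly bounded variances and covariances tending to zero as `|i - j| → ∞`
satisfies the weak law of large numbers (convergence in probability of the sample mean). -/
theorem bernstein_lln {Ω : Type*} [MeasurableSpace Ω] (μ : Measure Ω) [IsProbabilityMeasure μ]
    (Y : ℕ → Ω → ℝ) (m K : ℝ)
    (hmeas : ∀ j, Measurable (Y j))
    (hL2 : ∀ j, MemLp (Y j) 2 μ)
    (hmean : ∀ j, ∫ ω, Y j ω ∂μ = m)
    (hvar : ∀ j, ∫ ω, (Y j ω - m) ^ 2 ∂μ ≤ K)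
    (hcov : ∀ ε > 0, ∃ N : ℕ, ∀ i j : ℕ, N ≤ ((i : ℤ) - (j : ℤ)).natAbs →
      |∫ ω, (Y i ω - m) * (Y j ω - m) ∂μ| < ε) :
    TendstoInMeasure μ
      (fun (n : ℕ) ω => (n : ℝ)⁻¹ * ∑ i ∈ Finset.range n, Y (i + 1) ω) atTop
      (fun _ => m) :=
  bernstein_lln_general μ Y m K hL2 hvar hcov
end
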